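/- For every integer n ≥ 2, the number of mutually abelian-unbordered pairs (u,v) of binary words with |u| = |v| = n and |u|_a ≠ |v|_a equals 2·Σ_{r2=0}^{n−2} Σ_{r1=r2+2}^{n} T(n, r1, r2), where T(n, r1, r2) is the number of pairs (u,w) of binary words of length n with |u|_a = r1 and |w|_a = r2 such that (a) for every t with 1 ≤ t ≤ n the prefix of u of length t is not abelian equivalent to the prefix of w of length t, and (b) for every t with 0 ≤ t ≤ n−1, |u_t|_a − |w_t|_a ≠ r1 − r2, where u_t and w_t denote the prefixes of u and w of length t. -/

import Mathlib

/-- Abelian equivalence of binary words; the alphabet `{a, b}` is encoded by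
`Bool` with `a = true` and `b = false`. -/
def AbEq (x y : List Bool) : Prop :=
  x.count true = y.count true ∧ x.count false = y.count false

/-- `(x, y)` is an internal abelian-border of `(u, v)`: `x` is a nonempty proper
suffix of `u`, `y` is a proper prefix of `v`, and `x ~ y`. -/
def IsIntBorder (u v x y : List Bool) : Prop :=
  x ≠ [] ∧ x ≠ u ∧ x <:+ u ∧ y <+: v ∧ y ≠ v ∧ AbEq x y

/-- `(x, y)` is an external abelian-border of `(u, v)`: `x` is a nonempty proper
prefix of `u`, `y` is a proper suffix of `v`, and `x ~ y`. -/
def IsExtBorder (u v x y : List Bool) : Prop :=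
  x ≠ [] ∧ x ≠ u ∧ x <+: u ∧ y <:+ v ∧ y ≠ v ∧ AbEq x y

/-- `(u, v)` has an internal abelian-border. -/
def HasIntB (u v : List Bool) : Prop := ∃ x y, IsIntBorder u v x y

/-- `(u, v)` has an external abelian-border. -/
def HasExtB (u v : List Bool) : Prop := ∃ x y, IsExtBorder u v x y

/-- `(u, v)` is mutually abelian-bordered. -/
def MAB (u v : List Bool) : Prop := HasIntB u v ∧ HasExtB u v

/-- `(u, v)` is mutually abelian-unbordered. -/
def MAU (u v : List Bool) : Prop := ¬ HasIntB u v ∧ ¬ HasExtB u v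

/-- `lsb u v` is the length of the shortest internal abelian-border of `(u, v)`:
the least `t` with `1 ≤ t ≤ |u| - 1` such that the suffix of `u` of length `t`
is abelian equivalent to the prefix of `v` of length `t`. -/
noncomputable def lsb (u v : List Bool) : ℕ :=
  sInf {t | 1 ≤ t ∧ t ≤ u.length - 1 ∧ AbEq (u.drop (u.length - t)) (v.take t)}

/-- `T n r1 r2` is the number of pairs `(u, w)` of binary words of length `n`
with `|u|_a = r1`, `|w|_a = r2` such that no two prefixes of the same positive
length are abelian equivalent, and no proper prefixes realize the full
difference `r1 - r2` of `a`-counts. -/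
noncomputable def T (n r1 r2 : ℕ) : ℕ :=
  {p : List Bool × List Bool | p.1.length = n ∧ p.2.length = n ∧
      p.1.count true = r1 ∧ p.2.count true = r2 ∧
      (∀ t, 1 ≤ t → t ≤ n → ¬ AbEq (p.1.take t) (p.2.take t)) ∧
      (∀ t, t ≤ n - 1 →
        ((p.1.take t).count true : ℤ) - ((p.2.take t).count true : ℤ)
          ≠ (r1 : ℤ) - (r2 : ℤ))}.ncard

lemma count_tf (l : List Bool) : l.count true + l.count false = l.length := by
  induction l with
  | nil => simp
  | cons h t ih => cases h <;> simp [List.count_cons] <;> omega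

lemma abEq_iff {x y : List Bool} :
    AbEq x y ↔ x.length = y.length ∧ x.count true = y.count true := by
  have hx := count_tf x; have hy := count_tf y
  constructor
  · rintro ⟨h1, h2⟩; exact ⟨by omega, h1⟩
  · rintro ⟨h1, h2⟩; exact ⟨h2, by omega⟩

lemma count_split (l : List Bool) (s : ℕ) :
    (l.take s).count true + (l.drop s).count true = l.count true := by
  rw [← List.count_append, List.take_append_drop]

lemma count_take_reverse (v : List Bool) (t : ℕ) :
    (v.reverse.take t).count true = (v.drop (v.length - t)).count true := by
  rw [List.take_reverse, List.count_reverse]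

lemma count_map_not (l : List Bool) : (l.map not).count true = l.count false := by
  induction l with
  | nil => simp
  | cons h t ih => cases h <;> simp [List.count_cons, ih]

lemma count_take_succ (l : List Bool) (t : ℕ) :
    (l.take t).count true ≤ (l.take (t+1)).count true ∧
    (l.take (t+1)).count true ≤ (l.take t).count true + 1 := by
  rw [List.take_succ, List.count_append]
  have h : (l[t]?.toList).count true ≤ 1 := by
    have := List.count_le_length (a := true) (l := l[t]?.toList)
    have : l[t]?.toList.length ≤ 1 := by cases l[t]? <;> simp
    omega
  omega

lemma hasIntB_iff {u v : List Bool} {n : ℕ} (hu : u.length = n) (hv : v.length = n) :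
    HasIntB u v ↔ ∃ t, 1 ≤ t ∧ t ≤ n - 1 ∧
      (u.drop (n - t)).count true = (v.take t).count true := by
  constructor
  · rintro ⟨x, y, hx0, hxu, hxs, hyp, hyv, hab⟩
    obtain ⟨hlen, hcnt⟩ := abEq_iff.mp hab
    refine ⟨x.length, ?_, ?_, ?_⟩
    · have h0 : x.length ≠ 0 := fun h => hx0 (List.length_eq_zero_iff.mp h)
      omega
    · have h1 : x.length ≤ n := hu ▸ hxs.length_le
      have h2 : x.length ≠ n := by
        intro h
        exact hxu (hxs.sublist.eq_of_length (by omega))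
      omega
    · have hx : x = u.drop (u.length - x.length) := List.suffix_iff_eq_drop.mp hxs
      have hy : y = v.take y.length := List.prefix_iff_eq_take.mp hyp
      rw [hu] at hx
      rw [← hlen] at hy
      rw [← hx, ← hy]; exact hcnt
  · rintro ⟨t, ht1, ht2, hc⟩
    have hn2 : 2 ≤ n := by omega
    have hld : (u.drop (n - t)).length = t := by
      rw [List.length_drop, hu]; omega
    have hlt : (v.take t).length = t := by
      rw [List.length_take, hv]; omega
    refine ⟨u.drop (n - t), v.take t, ?_, ?_, List.drop_suffix _ _, List.take_prefix _ _, ?_, ?_⟩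
    · intro h; rw [h] at hld; simp at hld; omega
    · intro h; rw [h, hu] at hld; omega
    · intro h; rw [h, hv] at hlt; omega
    · exact abEq_iff.mpr ⟨by omega, hc⟩

lemma hasExtB_iff {u v : List Bool} {n : ℕ} (hu : u.length = n) (hv : v.length = n) :
    HasExtB u v ↔ ∃ t, 1 ≤ t ∧ t ≤ n - 1 ∧
      (u.take t).count true = (v.drop (n - t)).count true := by
  constructor
  · rintro ⟨x, y, hx0, hxu, hxp, hys, hyv, hab⟩
    obtain ⟨hlen, hcnt⟩ := abEq_iff.mp hab
    refine ⟨x.length, ?_, ?_, ?_⟩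
    · have h0 : x.length ≠ 0 := fun h => hx0 (List.length_eq_zero_iff.mp h)
      omega
    · have h1 : x.length ≤ n := hu ▸ hxp.length_le
      have h2 : x.length ≠ n := by
        intro h
        exact hxu (hxp.sublist.eq_of_length (by omega))
      omega
    · have hx : x = u.take x.length := List.prefix_iff_eq_take.mp hxp
      have hy : y = v.drop (v.length - y.length) := List.suffix_iff_eq_drop.mp hys
      rw [hv, ← hlen] at hy
      rw [← hx, ← hy]; exact hcnt
  · rintro ⟨t, ht1, ht2, hc⟩
    have hld : (v.drop (n - t)).length = t := by
      rw [List.length_drop, hv]; omega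
    have hlt : (u.take t).length = t := by
      rw [List.length_take, hu]; omega
    refine ⟨u.take t, v.drop (n - t), ?_, ?_, List.take_prefix _ _, List.drop_suffix _ _, ?_, ?_⟩
    · intro h; rw [h] at hlt; simp at hlt; omega
    · intro h; rw [h, hu] at hlt; omega
    · intro h; rw [h, hv] at hld; omega
    · exact abEq_iff.mpr ⟨by omega, hc⟩


def Mset (n r1 r2 : ℕ) : Set (List Bool × List Bool) :=
  {p | p.1.length = n ∧ p.2.length = n ∧ p.1.count true = r1 ∧ p.2.count true = r2 ∧
    MAU p.1 p.2}

def Tset (n r1 r2 : ℕ) : Set (List Bool × List Bool) :=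
  {p : List Bool × List Bool | p.1.length = n ∧ p.2.length = n ∧
      p.1.count true = r1 ∧ p.2.count true = r2 ∧
      (∀ t, 1 ≤ t → t ≤ n → ¬ AbEq (p.1.take t) (p.2.take t)) ∧
      (∀ t, t ≤ n - 1 →
        ((p.1.take t).count true : ℤ) - ((p.2.take t).count true : ℤ)
          ≠ (r1 : ℤ) - (r2 : ℤ))}

lemma T_eq_Tset (n r1 r2 : ℕ) : T n r1 r2 = (Tset n r1 r2).ncard := rfl

lemma cw_eq {w : List Bool} {n : ℕ} (hLw : w.length = n) (t : ℕ) :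
    (w.take t).count true = (w.reverse.drop (n - t)).count true := by
  have h := count_take_reverse w.reverse t
  rwa [List.reverse_reverse, List.length_reverse, hLw] at h

lemma mem_Tset_iff (n r1 r2 : ℕ) (hn : 2 ≤ n) (hne : r1 ≠ r2) (u w : List Bool) :
    (u, w) ∈ Tset n r1 r2 ↔ (u, w.reverse) ∈ Mset n r1 r2 := by
  unfold Tset Mset MAU
  simp only [Set.mem_setOf_eq]
  constructor
  · rintro ⟨hLu, hLw, hcu, hcw, ha, hb⟩
    have hLv : w.reverse.length = n := by simpa using hLw
    have hcv : w.reverse.count true = r2 := by rwa [List.count_reverse]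
    refine ⟨hLu, hLv, hcu, hcv, ?_, ?_⟩
    · rw [hasIntB_iff hLu hLv]
      rintro ⟨t, ht1, ht2, heq⟩
      have hA := count_split u (n - t)
      have hB := count_split w.reverse t
      have hw := cw_eq hLw (n - t)
      have hnn : n - (n - t) = t := by omega
      rw [hnn] at hw
      have hb' := hb (n - t) (by omega)
      rw [hw] at hb'
      rw [hcv] at hB
      rw [hcu] at hA
      omega
    · rw [hasExtB_iff hLu hLv]
      rintro ⟨t, ht1, ht2, heq⟩
      have hw := cw_eq hLw t
      refine ha t ht1 (by omega) (abEq_iff.mpr ⟨?_, ?_⟩)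
      · rw [List.length_take, List.length_take]; omega
      · rw [hw, heq]
  · rintro ⟨hLu, hLv, hcu, hcv, hni, hne'⟩
    have hLw : w.length = n := by simpa using hLv
    have hcw : w.count true = r2 := by
      rw [← hcv, List.count_reverse]
    refine ⟨hLu, hLw, hcu, hcw, ?_, ?_⟩
    · intro t ht1 htn hab
      obtain ⟨hlen, hcnt⟩ := abEq_iff.mp hab
      by_cases hteq : t = n
      · subst hteq
        have h1 : List.take t u = u := by rw [← hLu]; exact List.take_length
        have h2 : List.take t w = w := by rw [← hLw]; exact List.take_length
        rw [h1, h2] at hcnt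
        exact hne (by rw [← hcu, ← hcw, hcnt])
      · apply hne'
        rw [hasExtB_iff hLu hLv]
        exact ⟨t, ht1, by omega, by rw [hcnt]; exact cw_eq hLw t⟩
    · intro t htn hab
      by_cases ht0 : t = 0
      · subst ht0
        simp at hab
        exact hne (by omega)
      · apply hni
        rw [hasIntB_iff hLu hLv]
        refine ⟨n - t, by omega, by omega, ?_⟩
        have hw := cw_eq hLw t
        rw [hw] at hab
        have hA := count_split u t
        have hB := count_split w.reverse (n - t)
        rw [hcu] at hA
        rw [hcv] at hB
        have hnn : n - (n - t) = t := by omega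
        rw [hnn]
        omega

lemma not_inj : Function.Injective not := by
  intro a b h; cases a <;> cases b <;> simp_all

lemma count_map_not' (l : List Bool) : (l.map not).count false = l.count true := by
  have h1 := count_tf (l.map not)
  have h2 := count_tf l
  have h3 := count_map_not l
  have h4 : (l.map not).length = l.length := List.length_map not
  omega

lemma hasIntB_map_not {u v : List Bool} (h : HasIntB u v) :
    HasIntB (u.map not) (v.map not) := by
  obtain ⟨x, y, h0, h1, h2, h3, h4, h5, h6⟩ := h
  refine ⟨x.map not, y.map not, ?_, ?_, h2.map not, h3.map not, ?_, ?_, ?_⟩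
  · simp [h0]
  · intro h; exact h1 (List.map_injective_iff.mpr not_inj h)
  · intro h; exact h4 (List.map_injective_iff.mpr not_inj h)
  · rw [count_map_not, count_map_not]; exact h6
  · rw [count_map_not', count_map_not']; exact h5

lemma hasExtB_map_not {u v : List Bool} (h : HasExtB u v) :
    HasExtB (u.map not) (v.map not) := by
  obtain ⟨x, y, h0, h1, h2, h3, h4, h5, h6⟩ := h
  refine ⟨x.map not, y.map not, ?_, ?_, h2.map not, h3.map not, ?_, ?_, ?_⟩
  · simp [h0]
  · intro h; exact h1 (List.map_injective_iff.mpr not_inj h)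
  · intro h; exact h4 (List.map_injective_iff.mpr not_inj h)
  · rw [count_map_not, count_map_not]; exact h6
  · rw [count_map_not', count_map_not']; exact h5

lemma map_not_not (l : List Bool) : (l.map not).map not = l := by
  rw [List.map_map]
  have h : (not ∘ not) = id := funext fun b => by cases b <;> rfl
  rw [h, List.map_id]

lemma mem_Mset {n r1 r2 : ℕ} {u v : List Bool} :
    (u, v) ∈ Mset n r1 r2 ↔ u.length = n ∧ v.length = n ∧
      u.count true = r1 ∧ v.count true = r2 ∧ MAU u v := Iff.rfl

lemma mem_Tset {n r1 r2 : ℕ} {u w : List Bool} :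
    (u, w) ∈ Tset n r1 r2 ↔ u.length = n ∧ w.length = n ∧
      u.count true = r1 ∧ w.count true = r2 ∧
      (∀ t, 1 ≤ t → t ≤ n → ¬ AbEq (u.take t) (w.take t)) ∧
      (∀ t, t ≤ n - 1 →
        ((u.take t).count true : ℤ) - ((w.take t).count true : ℤ)
          ≠ (r1 : ℤ) - (r2 : ℤ)) := Iff.rfl

lemma MAU_map_not {u v : List Bool} (h : MAU u v) : MAU (u.map not) (v.map not) := by
  obtain ⟨h1, h2⟩ := h
  constructor
  · intro hb
    have := hasIntB_map_not hb
    rw [map_not_not, map_not_not] at this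
    exact h1 this
  · intro hb
    have := hasExtB_map_not hb
    rw [map_not_not, map_not_not] at this
    exact h2 this

lemma Mset_compl (n r1 r2 : ℕ) (hr1 : r1 ≤ n) (hr2 : r2 ≤ n) :
    (fun p : List Bool × List Bool => (p.1.map not, p.2.map not)) '' Mset n r1 r2
      = Mset n (n - r1) (n - r2) := by
  ext ⟨u, v⟩
  constructor
  · rintro ⟨⟨a, b⟩, hmem, heq⟩
    rw [mem_Mset] at hmem
    obtain ⟨hLa, hLb, hca, hcb, hm⟩ := hmem
    simp only [Prod.mk.injEq] at heq
    obtain ⟨rfl, rfl⟩ := heq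
    have h1 := count_tf a; have h2 := count_tf b
    rw [mem_Mset]
    refine ⟨by simpa using hLa, by simpa using hLb, ?_, ?_, MAU_map_not hm⟩
    · rw [count_map_not]; omega
    · rw [count_map_not]; omega
  · intro hmem
    rw [mem_Mset] at hmem
    obtain ⟨hLu, hLv, hcu, hcv, hm⟩ := hmem
    refine ⟨(u.map not, v.map not), mem_Mset.mpr ⟨by simpa using hLu, by simpa using hLv,
      ?_, ?_, MAU_map_not hm⟩,
      by simp only [Prod.mk.injEq]; exact ⟨map_not_not u, map_not_not v⟩⟩
    · have h1 := count_tf u; rw [count_map_not]; omega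
    · have h1 := count_tf v; rw [count_map_not]; omega

lemma ncard_Mset_compl (n r1 r2 : ℕ) (hr1 : r1 ≤ n) (hr2 : r2 ≤ n) :
    (Mset n r1 r2).ncard = (Mset n (n - r1) (n - r2)).ncard := by
  rw [← Mset_compl n r1 r2 hr1 hr2]
  rw [Set.ncard_image_of_injective]
  rintro ⟨a, b⟩ ⟨c, d⟩ h
  simp only [Prod.mk.injEq] at h
  obtain ⟨h1, h2⟩ := h
  have e1 := List.map_injective_iff.mpr not_inj h1
  have e2 := List.map_injective_iff.mpr not_inj h2
  simp [e1, e2]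

lemma T_eq_ncard_Mset (n r1 r2 : ℕ) (hn : 2 ≤ n) (hne : r1 ≠ r2) :
    T n r1 r2 = (Mset n r1 r2).ncard := by
  have himg : Tset n r1 r2
      = (fun p : List Bool × List Bool => (p.1, p.2.reverse)) '' Mset n r1 r2 := by
    ext ⟨u, w⟩
    constructor
    · intro h
      exact ⟨(u, w.reverse), (mem_Tset_iff n r1 r2 hn hne u w).mp h, by simp⟩

    · rintro ⟨⟨a, b⟩, hmem, heq⟩
      simp only [Prod.mk.injEq] at heq
      obtain ⟨rfl, rfl⟩ := heq
      exact (mem_Tset_iff n r1 r2 hn hne a b.reverse).mpr (by simpa using hmem)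
  rw [T_eq_Tset, himg, Set.ncard_image_of_injective]
  rintro ⟨a, b⟩ ⟨c, d⟩ h
  simp only [Prod.mk.injEq] at h
  obtain ⟨h1, h2⟩ := h
  have := List.reverse_injective h2
  simp [h1, this]

lemma T_succ_zero (n r2 : ℕ) (hn : 2 ≤ n) : T n (r2 + 1) r2 = 0 := by
  rw [T_eq_Tset]
  have : Tset n (r2 + 1) r2 = ∅ := by
    rw [Set.eq_empty_iff_forall_notMem]
    rintro ⟨u, w⟩ hmem
    rw [mem_Tset] at hmem
    obtain ⟨hLu, hLw, hcu, hcw, ha, hb⟩ := hmem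
    classical
    set P : ℕ → Prop := fun t =>
      ((u.take t).count true : ℤ) - ((w.take t).count true : ℤ) ≤ 0 with hP
    have g0 : P 0 := by simp [hP]
    have hun : (u.take n).count true = r2 + 1 := by rw [← hLu, List.take_length, hcu]
    have hwn : (w.take n).count true = r2 := by rw [← hLw, List.take_length, hcw]
    have gn : ¬ P n := by simp [hP, hun, hwn]
    set t0 := Nat.findGreatest P n with ht0
    have hPt0 : P t0 := Nat.findGreatest_spec (Nat.zero_le n) g0
    have ht0n : t0 ≤ n := Nat.findGreatest_le n
    have ht0ne : t0 ≠ n := fun h => gn (h ▸ hPt0)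
    have hnot : ¬ P (t0 + 1) :=
      Nat.findGreatest_is_greatest (Nat.lt_succ_self t0) (by omega)
    have hsu := count_take_succ u t0
    have hsw := count_take_succ w t0
    have hstep : ((u.take (t0+1)).count true : ℤ) - ((w.take (t0+1)).count true : ℤ) = 1 := by
      simp only [hP, not_le] at hnot
      omega
    have ht0eq : t0 = n - 1 := by
      by_contra hne2
      exact (hb (t0 + 1) (by omega)) (by rw [hstep]; push_cast; ring)
    have hsu2 := count_take_succ u (n - 1)
    have hsw2 := count_take_succ w (n - 1)
    have hn1 : n - 1 + 1 = n := by omega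
    rw [hn1] at hsu2 hsw2
    have hPn1 : P (n - 1) := ht0eq ▸ hPt0
    simp only [hP] at hPn1
    have heq : (u.take (n-1)).count true = (w.take (n-1)).count true := by omega
    refine ha (n - 1) (by omega) (by omega) (abEq_iff.mpr ⟨?_, heq⟩)
    rw [List.length_take, List.length_take, hLu, hLw]
  rw [this, Set.ncard_empty]

theorem stmt_15 (n : ℕ) (hn : 2 ≤ n) :
    {p : List Bool × List Bool | p.1.length = n ∧ p.2.length = n ∧
        p.1.count true ≠ p.2.count true ∧ MAU p.1 p.2}.ncard
      = 2 * ∑ r2 ∈ Finset.Icc 0 (n - 2), ∑ r1 ∈ Finset.Icc (r2 + 2) n, T n r1 r2 := by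
  classical
  set S : Set (List Bool × List Bool) :=
    {p : List Bool × List Bool | p.1.length = n ∧ p.2.length = n ∧
        p.1.count true ≠ p.2.count true ∧ MAU p.1 p.2} with hSdef
  have hfin : S.Finite := by
    apply Set.Finite.subset
      (Set.Finite.prod (List.finite_length_eq Bool n) (List.finite_length_eq Bool n))
    rintro ⟨u, v⟩ h
    exact ⟨h.1, h.2.1⟩
  set P2 : Finset (ℕ × ℕ) := Finset.range (n+1) ×ˢ Finset.range (n+1) with hP2
  have hcard : S.ncard
      = ∑ q ∈ P2.filter (fun q => q.1 ≠ q.2), (Mset n q.1 q.2).ncard := by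
    rw [Set.ncard_eq_toFinset_card S hfin]
    rw [Finset.card_eq_sum_card_fiberwise
      (f := fun p : List Bool × List Bool => (p.1.count true, p.2.count true))
      (t := P2.filter (fun q => q.1 ≠ q.2)) ?memf]
    case memf =>
      intro p hp
      rw [Finset.mem_coe, Set.Finite.mem_toFinset] at hp
      obtain ⟨h1, h2, h3, h4⟩ := hp
      simp only [hP2, Finset.mem_coe, Finset.mem_filter, Finset.mem_product, Finset.mem_range]
      have c1 := List.count_le_length (a := true) (l := p.1)
      have c2 := List.count_le_length (a := true) (l := p.2)
      exact ⟨⟨by omega, by omega⟩, h3⟩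
    apply Finset.sum_congr rfl
    rintro ⟨r1, r2⟩ hq
    simp only [hP2, Finset.mem_filter, Finset.mem_product, Finset.mem_range] at hq
    rw [← Set.ncard_coe_finset]
    congr 1
    ext ⟨u, v⟩
    simp only [Finset.coe_filter, Set.mem_setOf_eq, Set.Finite.mem_toFinset, mem_Mset,
      Prod.mk.injEq, hSdef]
    constructor
    · rintro ⟨⟨h1, h2, h3, h4⟩, h5, h6⟩
      exact ⟨h1, h2, h5, h6, h4⟩
    · rintro ⟨h1, h2, h3, h4, h5⟩
      exact ⟨⟨h1, h2, by omega, h5⟩, h3, h4⟩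
  have hsplit : P2.filter (fun q => q.1 ≠ q.2)
      = (P2.filter fun q => q.2 < q.1) ∪ (P2.filter fun q => q.1 < q.2) := by
    ext q
    simp only [Finset.mem_filter, Finset.mem_union]
    have : q.1 ≠ q.2 ↔ (q.2 < q.1 ∨ q.1 < q.2) := by omega
    tauto
  have hdisj : Disjoint (P2.filter fun q => q.2 < q.1) (P2.filter fun q => q.1 < q.2) := by
    rw [Finset.disjoint_left]
    intro q h1 h2
    simp only [Finset.mem_filter] at h1 h2
    omega
  have hrefl : ∑ q ∈ P2.filter (fun q => q.1 < q.2), (Mset n q.1 q.2).ncard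
      = ∑ q ∈ P2.filter (fun q => q.2 < q.1), (Mset n q.1 q.2).ncard := by
    apply Finset.sum_nbij' (i := fun q : ℕ × ℕ => (n - q.1, n - q.2))
      (j := fun q : ℕ × ℕ => (n - q.1, n - q.2))
    · intro q hq
      simp only [hP2, Finset.mem_filter, Finset.mem_product, Finset.mem_range] at *
      omega
    · intro q hq
      simp only [hP2, Finset.mem_filter, Finset.mem_product, Finset.mem_range] at *
      omega
    · intro q hq
      simp only [hP2, Finset.mem_filter, Finset.mem_product, Finset.mem_range] at hq
      have e1 : n - (n - q.1) = q.1 := by omega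
      have e2 : n - (n - q.2) = q.2 := by omega
      simp [e1, e2]
    · intro q hq
      simp only [hP2, Finset.mem_filter, Finset.mem_product, Finset.mem_range] at hq
      have e1 : n - (n - q.1) = q.1 := by omega
      have e2 : n - (n - q.2) = q.2 := by omega
      simp [e1, e2]
    · intro q hq
      simp only [hP2, Finset.mem_filter, Finset.mem_product, Finset.mem_range] at hq
      exact ncard_Mset_compl n q.1 q.2 (by omega) (by omega)
  have hfinal : ∑ q ∈ P2.filter (fun q => q.2 < q.1), (Mset n q.1 q.2).ncard
      = ∑ r2 ∈ Finset.Icc 0 (n - 2), ∑ r1 ∈ Finset.Icc (r2 + 2) n, T n r1 r2 := by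
    rw [Finset.sum_filter, hP2, Finset.sum_product, Finset.sum_comm]
    have hA : ∀ r2, (∑ r1 ∈ Finset.range (n+1),
        if r2 < r1 then (Mset n r1 r2).ncard else 0)
        = ∑ r1 ∈ Finset.Icc (r2 + 2) n, T n r1 r2 := by
      intro r2
      rw [← Finset.sum_filter]
      have hfe : (Finset.range (n+1)).filter (fun r1 => r2 < r1) = Finset.Icc (r2+1) n := by
        ext x
        simp only [Finset.mem_filter, Finset.mem_range, Finset.mem_Icc]
        omega
      rw [hfe]
      have h1 : ∑ r1 ∈ Finset.Icc (r2+2) n, T n r1 r2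
          = ∑ r1 ∈ Finset.Icc (r2+2) n, (Mset n r1 r2).ncard := by
        apply Finset.sum_congr rfl
        intro x hx
        simp only [Finset.mem_Icc] at hx
        exact T_eq_ncard_Mset n x r2 hn (by omega)
      have h2 : ∑ r1 ∈ Finset.Icc (r2+2) n, (Mset n r1 r2).ncard
          = ∑ r1 ∈ Finset.Icc (r2+1) n, (Mset n r1 r2).ncard := by
        apply Finset.sum_subset (Finset.Icc_subset_Icc (by omega) le_rfl)
        intro x hx hnx
        simp only [Finset.mem_Icc] at hx hnx
        have hxe : x = r2 + 1 := by omega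
        subst hxe
        rw [← T_eq_ncard_Mset n (r2+1) r2 hn (by omega)]
        exact T_succ_zero n r2 hn
      exact (h1.trans h2).symm
    calc ∑ r2 ∈ Finset.range (n+1), ∑ r1 ∈ Finset.range (n+1),
          (if r2 < r1 then (Mset n r1 r2).ncard else 0)
        = ∑ r2 ∈ Finset.range (n+1), ∑ r1 ∈ Finset.Icc (r2 + 2) n, T n r1 r2 :=
          Finset.sum_congr rfl (fun r2 _ => hA r2)
      _ = ∑ r2 ∈ Finset.Icc 0 (n - 2), ∑ r1 ∈ Finset.Icc (r2 + 2) n, T n r1 r2 := by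
          refine (Finset.sum_subset ?_ ?_).symm
          · intro x hx
            simp only [Finset.mem_Icc, Finset.mem_range] at *
            omega
          · intro x hx hnx
            simp only [Finset.mem_Icc, Finset.mem_range] at hx hnx
            rw [Finset.Icc_eq_empty (by omega), Finset.sum_empty]
  rw [hcard, hsplit, Finset.sum_union hdisj, hrefl, hfinal, two_mul]
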